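/- There exists a zero-dimensional separable metrizable space X ⊆ 2^ω (namely a suitable filter on ω) that has the perfect set property for open subsets but not the perfect set property for closed subsets. -/

import Mathlib

/-- `A` contains a homeomorphic copy of the Cantor set `2^ω`. -/
def ContainsCantorCopy {T : Type} [TopologicalSpace T] (A : Set T) : Prop :=
  ∃ f : (ℕ → Bool) → T, Continuous f ∧ Function.Injective f ∧ Set.range f ⊆ A

/-- The characteristic function identification of `P(ω)` with `2^ω`. -/
noncomputable def chi (s : Set ℕ) : ℕ → Bool := fun n =>
  @decide (n ∈ s) (Classical.propDecidable _)

/-- `F` is a filter on `ω` extending the Fréchet (cofinite) filter. -/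
def IsFilterOnOmega (F : Set (Set ℕ)) : Prop :=
  (∀ s : Set ℕ, sᶜ.Finite → s ∈ F) ∧
  (∀ s ∈ F, ∀ t : Set ℕ, s ⊆ t → t ∈ F) ∧
  (∀ s ∈ F, ∀ t ∈ F, s ∩ t ∈ F) ∧
  (∅ : Set ℕ) ∉ F

/-- `X` has the perfect set property for (relatively) open subsets. -/
def PSPopen {T : Type} [TopologicalSpace T] (X : Set T) : Prop :=
  ∀ U : Set T, IsOpen U → ¬ (U ∩ X).Countable → ContainsCantorCopy (U ∩ X)

/-- `X` has the perfect set property for (relatively) closed subsets. -/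
def PSPclosed {T : Type} [TopologicalSpace T] (X : Set T) : Prop :=
  ∀ C : Set T, IsClosed C → ¬ (C ∩ X).Countable → ContainsCantorCopy (C ∩ X)

/-!
Let `e : 2^ω → P(ω)` be an independent family such that `χ ∘ e` is continuous, hence a closed
embedding, and let `S ⊆ 2^ω` be an uncountable set containing no Cantor set (half of a Bernstein
decomposition). By independence the cofinite sets, the `e x` with `x ∈ S` and the `(e x)ᶜ` with
`x ∉ S` generate a proper filter `F`, which contains `e x` exactly when `x ∈ S`. So in
`X = χ '' F` the closed set `range (χ ∘ e)` cuts out a homeomorphic copy of `S`, and `X` fails the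
perfect set property for closed sets. For open sets it holds because `F` is upward closed: an open
set meeting `X` uncountably contains some `χ t` with `t ∈ F` co-infinite, together with a cylinder
around it, and enlarging `t` freely on `tᶜ` beyond the length of that cylinder gives a Cantor set
inside.
-/

open Set Filter Function Cardinal TopologicalSpace

universe u

lemma chi_eq_true_iff {s : Set ℕ} {n : ℕ} : chi s n = true ↔ n ∈ s := by
  simp [chi]

lemma chi_injective : Injective chi := fun s t h ↦ by
  ext n
  rw [← chi_eq_true_iff, ← chi_eq_true_iff, h]

lemma chi_setOf_eq_true (x : ℕ → Bool) : chi {n | x n = true} = x := by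
  funext n
  simp [chi]

lemma range_chi_comp_inter_image {ι : Type*} (A : ι → Set ℕ) (F : Set (Set ℕ)) :
    range (chi ∘ A) ∩ chi '' F = (chi ∘ A) '' {i | A i ∈ F} := by
  ext z
  constructor
  · rintro ⟨⟨i, rfl⟩, t, htF, hti⟩
    refine ⟨i, ?_, rfl⟩
    rwa [mem_ofPred_eq, ← chi_injective hti]
  · rintro ⟨i, hi, rfl⟩
    exact ⟨mem_range_self i, A i, hi, rfl⟩

lemma ContainsCantorCopy.of_image {T T' : Type} [TopologicalSpace T] [TopologicalSpace T']
    {E : T → T'} (hE : Topology.IsEmbedding E) {S : Set T} (h : ContainsCantorCopy (E '' S)) :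
    ContainsCantorCopy S := by
  obtain ⟨f, hfc, hfi, hfS⟩ := h
  choose g hgS hEg using fun x ↦ hfS (mem_range_self x)
  have hEg' : E ∘ g = f := funext hEg
  refine ⟨g, hE.continuous_iff.mpr (hEg' ▸ hfc), fun x y hxy ↦ hfi ?_, range_subset_iff.mpr hgS⟩
  rw [← hEg x, ← hEg y, hxy]

lemma exists_continuous_injective_eqOn_compl {ι : Type*} [Countable ι] {R : Set ι}
    (hR : R.Infinite) (z : ι → Bool) :
    ∃ f : (ℕ → Bool) → ι → Bool, Continuous f ∧ Injective f ∧ ∀ x, EqOn (f x) z Rᶜ := by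
  classical
  have := hR.to_subtype
  obtain ⟨e⟩ : Nonempty (ℕ ≃ R) := nonempty_equiv_of_countable
  let H := Homeomorph.piEquivPiSubtypeProd (· ∈ R) fun _ ↦ Bool
  refine ⟨fun x ↦ H.symm (x ∘ e.symm, fun i ↦ z i), ?_, ?_, ?_⟩
  · fun_prop
  · intro x y hxy
    have := congrArg (fun w ↦ w ∘ e) (Prod.ext_iff.mp (H.symm.injective hxy)).1
    simpa [Function.comp_assoc] using this
  · intro x i (hi : i ∉ R)
    simp [H, hi]

lemma pspOpen_chi_image_of_isUpperSet {F : Set (Set ℕ)} (hF : IsUpperSet F) :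
    PSPopen (chi '' F) := by
  intro U hU hunc
  have hcofinite : (chi '' {t : Set ℕ | tᶜ.Finite}).Countable :=
    (Set.Countable.ofPred_finite.preimage compl_injective).image _
  obtain ⟨t, htF, htU, htinf⟩ : ∃ t ∈ F, chi t ∈ U ∧ tᶜ.Infinite := by
    by_contra! h
    refine hunc (hcofinite.mono ?_)
    rintro _ ⟨hU, t, htF, rfl⟩
    exact ⟨t, h t htF hU, rfl⟩
  obtain ⟨_, ⟨y, n, rfl⟩, hty, hcyl⟩ :=
    (PiNat.isTopologicalBasis_cylinders fun _ ↦ Bool).exists_subset_of_mem_open htU hU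
  rw [← PiNat.mem_cylinder_iff_eq.mp hty] at hcyl
  obtain ⟨f, hfc, hfi, hft⟩ :=
    exists_continuous_injective_eqOn_compl (htinf.sdiff (finite_Iio n)) (chi t)
  refine ⟨f, hfc, hfi, range_subset_iff.mpr fun x ↦ ⟨hcyl fun i hi ↦ ?_, ?_⟩⟩
  · exact hft x fun h ↦ h.2 hi
  · refine ⟨_, hF (fun i hi ↦ ?_) htF, chi_setOf_eq_true (f x)⟩
    rw [mem_ofPred_eq, hft x fun h ↦ h.1 hi, chi_eq_true_iff]
    exact hi

lemma isFilterOnOmega_sets {f : Filter ℕ} [f.NeBot] (hf : f ≤ cofinite) :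
    IsFilterOnOmega f.sets :=
  ⟨fun _ hs ↦ hf (mem_cofinite.mpr hs), fun _ hs _ hst ↦ mem_of_superset hs hst,
    fun _ hs _ ht ↦ inter_mem hs ht, empty_notMem f⟩

section Independent

variable {α ι : Type*}

-- `{m | m ∈ A i ↔ i ∈ T}` is `A i` or `(A i)ᶜ` according as `i ∈ T` or not.
def IsIndependent (A : ι → Set α) : Prop :=
  ∀ s : Set ι, s.Finite → ∀ T : Set ι, {m | ∀ i ∈ s, m ∈ A i ↔ i ∈ T}.Infinite

def patternFilter (A : ι → Set α) (T : Set ι) : Filter α :=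
  cofinite ⊓ ⨅ i, 𝓟 {m | m ∈ A i ↔ i ∈ T}

variable {A : ι → Set α}

theorem IsIndependent.injective (hA : IsIndependent A) : Injective A := by
  intro i j hij
  by_contra hne
  obtain ⟨m, hm⟩ := (hA {i, j} (toFinite _) {i}).nonempty
  have hmj := hm j (by simp)
  rw [← hij] at hmj
  exact hne (hmj.mp ((hm i (by simp)).mpr rfl)).symm

theorem IsIndependent.neBot_patternFilter (hA : IsIndependent A) (T : Set ι) :
    (patternFilter A T).NeBot := by
  refine inf_neBot_iff_frequently_right.mpr fun {p} hp ↦ frequently_cofinite_iff_infinite.mpr ?_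
  obtain ⟨s, hs, hsp⟩ := ((hasBasis_iInf_principal_finite _).eventually_iff).mp hp
  exact (hA s hs T).mono fun m hm ↦ hsp (mem_iInter₂.mpr hm)

lemma mem_patternFilter_iff {T : Set ι} [(patternFilter A T).NeBot] {i : ι} :
    A i ∈ patternFilter A T ↔ i ∈ T := by
  have hgen : {m | m ∈ A i ↔ i ∈ T} ∈ patternFilter A T :=
    mem_inf_of_right (mem_iInf_of_mem i (mem_principal_self _))
  refine ⟨fun hAi ↦ ?_, fun hi ↦ mem_of_superset hgen fun m hm ↦ hm.mpr hi⟩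
  obtain ⟨m, hm⟩ := Filter.nonempty_of_mem (inter_mem hAi hgen)
  exact hm.2.mp hm.1

end Independent

section CantorIndependent

def finPrefix (n : ℕ) (x : ℕ → Bool) : Fin n → Bool := fun i ↦ x i

lemma continuous_finPrefix (n : ℕ) : Continuous (finPrefix n) :=
  continuous_pi fun i ↦ continuous_apply (i : ℕ)

lemma eventually_injOn_finPrefix {s : Set (ℕ → Bool)} (hs : s.Finite) :
    ∀ᶠ n in atTop, InjOn (finPrefix n) s := by
  simp only [InjOn]
  rw [hs.eventually_all]
  intro x _
  rw [hs.eventually_all]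
  intro y _
  obtain rfl | ⟨i, hi⟩ := eq_or_ne x y |>.imp id Function.ne_iff.mp
  · exact Eventually.of_forall fun _ _ ↦ rfl
  · filter_upwards [eventually_gt_atTop i] with n hn hxy
    exact absurd (congrFun hxy ⟨i, hn⟩) hi

noncomputable def natEquivCode : ℕ ≃ Σ n : ℕ, Set (Fin n → Bool) :=
  Classical.choice nonempty_equiv_of_countable

def cantorIndependent (x : ℕ → Bool) : Set ℕ :=
  {m | finPrefix (natEquivCode m).1 x ∈ (natEquivCode m).2}

lemma isIndependent_cantorIndependent : IsIndependent cantorIndependent := by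
  intro s hs T
  have hN : {n | InjOn (finPrefix n) s}.Infinite :=
    Nat.frequently_atTop_iff_infinite.mp (eventually_injOn_finPrefix hs).frequently
  let code : ℕ → ℕ := fun n ↦ natEquivCode.symm ⟨n, finPrefix n '' (s ∩ T)⟩
  have hcode : Injective code := fun a b h ↦ congrArg Sigma.fst (natEquivCode.symm.injective h)
  refine (hN.image hcode.injOn).mono ?_
  rintro _ ⟨n, hn, rfl⟩ x hx
  simp only [cantorIndependent, code, mem_ofPred_eq]
  rw [Equiv.apply_symm_apply, hn.mem_image_iff inter_subset_left hx]
  exact and_iff_right hx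

lemma continuous_chi_cantorIndependent : Continuous (chi ∘ cantorIndependent) :=
  continuous_pi fun m ↦ continuous_of_discreteTopology.comp
    (g := fun σ ↦ @decide (σ ∈ (natEquivCode m).2) (Classical.propDecidable _))
    (continuous_finPrefix _)

end CantorIndependent

section Bernstein

theorem exists_injective_forall_mem {κ α : Type u} [LinearOrder κ] [WellFoundedLT κ]
    (B : κ → Set α) (hB : ∀ k, #(Iio k) < #(B k)) :
    ∃ h : κ → α, Injective h ∧ ∀ k, h k ∈ B k := by
  have fresh : ∀ k (f : Iio k → α), ∃ x ∈ B k, x ∉ range f := fun k f ↦ by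
    by_contra! hsub
    exact (hB k).not_ge ((mk_le_mk_of_subset hsub).trans mk_range_le)
  choose pick hpick_mem hpick_fresh using fresh
  let h : κ → α := wellFounded_lt.fix fun k rec ↦ pick k fun j ↦ rec j j.2
  have h_eq : ∀ k, h k = pick k fun j ↦ h j := wellFounded_lt.fix_eq _
  have h_ne : ∀ j k, j < k → h j ≠ h k := fun j k hjk hjk' ↦
    hpick_fresh k (fun j ↦ h j) (h_eq k ▸ ⟨⟨j, hjk⟩, hjk'⟩)
  refine ⟨h, fun j k hjk ↦ ?_, fun k ↦ h_eq k ▸ hpick_mem _ _⟩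
  by_contra hne
  rcases lt_or_gt_of_ne hne with hlt | hlt
  · exact h_ne j k hlt hjk
  · exact h_ne k j hlt hjk.symm

theorem exists_mk_eq_forall_not_subset {α ι : Type u} (hα : ℵ₀ ≤ #α) (A : ι → Set α)
    (hι : #ι ≤ #α) (hA : ∀ i, #(A i) = #α) : ∃ S : Set α, #S = #α ∧ ∀ i, ¬ A i ⊆ S := by
  rcases isEmpty_or_nonempty ι with _ | _
  · exact ⟨univ, mk_univ, isEmptyElim⟩
  obtain ⟨f⟩ := hι
  obtain ⟨_, _, hord⟩ := exists_ord_eq_type_lt (α × Bool)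
  have hκ : #(α × Bool) = #α := by
    simpa using Cardinal.mul_eq_left hα (ofNat_lt_aleph0.le.trans hα) two_ne_zero
  -- `S` collects the points `h (x, false)`; the point `h (x, true) ∈ A (invFun f x)` avoids it.
  obtain ⟨h, hinj, hmem⟩ := exists_injective_forall_mem
    (fun k : α × Bool ↦ if k.2 then A (invFun f k.1) else univ) fun k ↦ by
      refine (mk_Iio_lt k hord).trans_eq (hκ.trans ?_)
      split_ifs
      exacts [(hA _).symm, mk_univ.symm]
  refine ⟨range fun x ↦ h (x, false), ?_, fun i hsub ↦ ?_⟩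
  · exact mk_range_eq _ (hinj.comp fun x y hxy ↦ (Prod.mk.inj hxy).1)
  · obtain ⟨x, rfl⟩ := invFun_surjective f.injective i
    obtain ⟨y, hy⟩ := hsub (by simpa using hmem (x, true))
    simpa using hinj hy

theorem mk_continuousMap_le {X Y : Type u} [TopologicalSpace X] [TopologicalSpace Y]
    [SeparableSpace X] [Nonempty X] [T2Space Y] : #C(X, Y) ≤ #(ℕ → Y) :=
  mk_le_of_injective (f := fun g ↦ g ∘ denseSeq X) fun g g' hgg' ↦
    ContinuousMap.ext_iff.mpr <| congrFun <| (denseRange_denseSeq X).equalizer g.continuous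
      g'.continuous hgg'

theorem exists_not_countable_not_containsCantorCopy :
    ∃ S : Set (ℕ → Bool), ¬ S.Countable ∧ ¬ ContainsCantorCopy S := by
  have hc : ℵ₀ < #(ℕ → Bool) := by simpa using cantor ℵ₀
  have hcc : #(ℕ → ℕ → Bool) = #(ℕ → Bool) := by simp
  obtain ⟨S, hS, hS_not_subset⟩ := exists_mk_eq_forall_not_subset hc.le
    (fun f : {f : C(ℕ → Bool, ℕ → Bool) // Injective f} ↦ range f.1)
    ((mk_subtype_le _).trans (mk_continuousMap_le.trans hcc.le)) fun f ↦ mk_range_eq _ f.2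
  refine ⟨S, fun hcount ↦ ?_, fun ⟨f, hfc, hfi, hfS⟩ ↦ hS_not_subset ⟨⟨f, hfc⟩, hfi⟩ hfS⟩
  exact (le_aleph0_iff_set_countable.mpr hcount).not_gt (hS ▸ hc)

end Bernstein

theorem exists_filter_psp_open_not_psp_closed :
    ∃ X : Set (ℕ → Bool), (∃ F : Set (Set ℕ), IsFilterOnOmega F ∧ X = chi '' F) ∧
      PSPopen X ∧ ¬ PSPclosed X := by
  obtain ⟨S, hS_uncountable, hS_cantor⟩ := exists_not_countable_not_containsCantorCopy
  let F := patternFilter cantorIndependent S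
  have : F.NeBot := isIndependent_cantorIndependent.neBot_patternFilter S
  have hE : Topology.IsClosedEmbedding (chi ∘ cantorIndependent) :=
    continuous_chi_cantorIndependent.isClosedEmbedding
      (chi_injective.comp isIndependent_cantorIndependent.injective)
  have hC : range (chi ∘ cantorIndependent) ∩ chi '' F.sets = (chi ∘ cantorIndependent) '' S := by
    rw [range_chi_comp_inter_image]
    congr 1
    ext x
    exact mem_patternFilter_iff
  refine ⟨chi '' F.sets, ⟨F.sets, isFilterOnOmega_sets inf_le_left, rfl⟩,
    pspOpen_chi_image_of_isUpperSet fun _ _ hst hs ↦ mem_of_superset hs hst, fun hPSP ↦ ?_⟩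
  have hC_uncountable : ¬ (range (chi ∘ cantorIndependent) ∩ chi '' F.sets).Countable := by
    rw [hC]
    exact fun h ↦ hS_uncountable (countable_of_injective_of_countable_image hE.injective.injOn h)
  exact hS_cantor ((hC ▸ hPSP _ hE.isClosed_range hC_uncountable).of_image hE.isEmbedding)
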